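/- Let n ≥ 3, and in ℂ[x_1,…,x_n] set p = x_1 + x_2 + ⋯ + x_n − x_1x_2⋯x_n and q = x_1 + (x_2 + x_3 + ⋯ + x_n)·x_2x_3⋯x_{n−1} − x_1x_2⋯x_n. Then there is no ℂ-algebra automorphism σ of ℂ[x_1,…,x_n] such that σ(⟨p⟩) = ⟨q⟩; that is, the hypersurfaces V(p) and V(q) are inequivalent embeddings in ℂ^n, even though they are isomorphic. -/

import Mathlib

/-!
The point `(1, …, 1)` is a critical point of `p`, since `∂p/∂xⱼ = 1 - ∏_{k ≠ j} xₖ`, whereas `q`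
has no critical point at all. By the chain rule an automorphism of `ℂ[x₁, …, xₙ]` carries
critical points of `p` to critical points of `σ p`, and `σ(⟨p⟩) = ⟨q⟩` forces `q = c · σ p` for a
nonzero constant `c`, which would give `q` a critical point.
-/

namespace MvPolynomial

variable {σ τ : Type*}

section CommSemiring

variable {R : Type*} [CommSemiring R]

theorem pderiv_aeval [Fintype σ] (g : σ → MvPolynomial τ R) (f : MvPolynomial σ R) (i : τ) :
    pderiv i (aeval g f) = ∑ j, aeval g (pderiv j f) * pderiv i (g j) := by
  classical
  induction f using MvPolynomial.induction_on with
  | C a => simp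
  | add f₁ f₂ h₁ h₂ => simp only [map_add, h₁, h₂, add_mul, Finset.sum_add_distrib]
  | mul_X f j h =>
    simp_rw [map_mul, aeval_X, pderiv_mul, h, map_add, map_mul, aeval_X, pderiv_X, add_mul,
      Finset.sum_add_distrib, Finset.sum_mul, mul_right_comm _ (g j)]
    simp [Pi.single_apply]

theorem pderiv_prod_X [DecidableEq σ] (s : Finset σ) (i : σ) :
    pderiv i (∏ j ∈ s, X j : MvPolynomial σ R) = if i ∈ s then ∏ j ∈ s.erase i, X j else 0 := by
  induction s using Finset.induction_on with
  | empty => simp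
  | @insert k s hk ih =>
    rw [Finset.prod_insert hk, pderiv_mul, ih, pderiv_X]
    by_cases hik : i = k
    · subst hik
      simp [hk, Finset.erase_insert hk]
    · have : k ≠ i := Ne.symm hik
      split_ifs with his <;> simp_all [Finset.erase_insert_of_ne this, Finset.prod_insert]

def IsCriticalPoint (f : MvPolynomial σ R) (a : σ → R) : Prop :=
  ∀ i, eval a (pderiv i f) = 0

theorem IsCriticalPoint.mul_C {f : MvPolynomial σ R} {a : σ → R} (h : IsCriticalPoint f a)
    (c : R) : IsCriticalPoint (f * C c) a := fun i => by
  simp [h i]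

theorem IsCriticalPoint.map_algEquiv [Fintype σ] {f : MvPolynomial σ R} {b : σ → R}
    (h : IsCriticalPoint f b) (e : MvPolynomial σ R ≃ₐ[R] MvPolynomial τ R) :
    IsCriticalPoint (e f) (fun k => eval b (e.symm (X k))) := by
  set a := fun k => eval b (e.symm (X k))
  have eval_e : ∀ g, eval a (e g) = eval b g := by
    have : (aeval a : MvPolynomial τ R →ₐ[R] R) = (aeval b).comp e.symm.toAlgHom :=
      algHom_ext fun k => by simp [a]
    intro g
    simpa using congr($this (e g))
  have e_eq_aeval : (e : MvPolynomial σ R →ₐ[R] MvPolynomial τ R) = aeval fun j => e (X j) :=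
    algHom_ext fun j => by simp
  intro i
  rw [← AlgEquiv.coe_toAlgHom, e_eq_aeval, pderiv_aeval, map_sum]
  refine Finset.sum_eq_zero fun j _ => ?_
  rw [map_mul, ← e_eq_aeval, AlgEquiv.coe_toAlgHom, eval_e, h j, zero_mul]

end CommSemiring

section CommRing

variable {R : Type*} [CommRing R]

theorem IsCriticalPoint.of_associated [IsReduced R] {f g : MvPolynomial σ R} {a : σ → R}
    (h : IsCriticalPoint f a) (hfg : Associated f g) : IsCriticalPoint g a := by
  obtain ⟨u, rfl⟩ := hfg
  obtain ⟨c, -, hc⟩ := (isUnit_iff_eq_C_of_isReduced (P := (u : MvPolynomial σ R))).mp u.isUnit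
  rw [hc]
  exact h.mul_C c

theorem isCriticalPoint_sum_X_sub_prod_X [Fintype σ] [DecidableEq σ] :
    IsCriticalPoint (∑ i, X i - ∏ i, X i : MvPolynomial σ R) 1 := fun i => by
  simp [pderiv_prod_X]

/-- This is `q` with `i₀ = 1`, `l = n` and `m = {2, …, n - 1}`. At a critical point, `∂/∂x_{i₀}`
and `∂/∂x_l` give `a_l M = 1` and `a_{i₀} = 1` (with `M = ∏_{j ∈ m} a_j`), and then each
`∂/∂x_i`, `i ∈ m`, gives `a_i M = 1 - S M` (with `S = ∑_{j ∈ insert l m} a_j`); summing,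
`(#m + 1)(S M - 1) = 0`, so `a_i M = 0`, contradicting `M ≠ 0`. -/
theorem not_isCriticalPoint_X_add_sum_mul_prod_sub_prod [Fintype σ] [DecidableEq σ] [IsDomain R]
    [CharZero R] {i₀ l : σ} {m : Finset σ} (hl : l ∉ m) (hi₀ : i₀ ∉ insert l m)
    (huniv : insert i₀ (insert l m) = Finset.univ) (hm : m.Nonempty) (a : σ → R) :
    ¬ IsCriticalPoint (X i₀ + (∑ j ∈ insert l m, X j) * ∏ j ∈ m, X j - ∏ j, X j) a := by
  intro h
  have E (i : σ) : (if i = i₀ then 1 else 0) + (if i ∈ insert l m then ∏ j ∈ m, a j else 0)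
      + (if i ∈ m then (∑ j ∈ insert l m, a j) * ∏ j ∈ m.erase i, a j else 0)
      - ∏ j ∈ Finset.univ.erase i, a j = 0 := by
    refine Eq.trans ?_ (h i)
    simp [pderiv_prod_X, pderiv_X, Pi.single_apply, apply_ite (eval a), eq_comm, add_assoc,
      add_comm]
  set S := ∑ j ∈ insert l m, a j
  set M := ∏ j ∈ m, a j
  obtain ⟨hi₀l, hi₀m⟩ : i₀ ≠ l ∧ i₀ ∉ m := by simpa using hi₀
  have hlM : a l * M = 1 := by
    have := E i₀
    rw [← huniv, Finset.erase_insert hi₀, Finset.prod_insert hl, if_pos rfl, if_neg hi₀,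
      if_neg hi₀m] at this
    linear_combination -this
  have hM : M ≠ 0 := right_ne_zero_of_mul_eq_one hlM
  have ha₀ : a i₀ = 1 := by
    have := E l
    rw [← huniv, Finset.erase_insert_of_ne hi₀l, Finset.erase_insert hl,
      Finset.prod_insert hi₀m, if_neg hi₀l.symm, if_pos (Finset.mem_insert_self l m),
      if_neg hl] at this
    have : M * (1 - a i₀) = 0 := by linear_combination this
    linear_combination -(mul_eq_zero.mp this).resolve_left hM
  have hP : ∏ j, a j = 1 := by
    rw [← huniv, Finset.prod_insert hi₀, Finset.prod_insert hl, ha₀, hlM, one_mul]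
  have hmid : ∀ i ∈ m, a i * M = 1 - S * M := fun i hi => by
    have := E i
    rw [if_neg (ne_of_mem_of_not_mem hi hi₀m), if_pos (Finset.mem_insert_of_mem hi),
      if_pos hi] at this
    linear_combination a i * this - S * Finset.mul_prod_erase m a hi
      + Finset.mul_prod_erase Finset.univ a (Finset.mem_univ i) + hP
  have hSM : S * M = 1 := by
    have hsum : S * M = 1 + m.card * (1 - S * M) := calc
      S * M = a l * M + ∑ i ∈ m, a i * M := by rw [Finset.sum_mul, Finset.sum_insert hl]
      _ = 1 + m.card * (1 - S * M) := by
        rw [hlM, Finset.sum_congr rfl hmid, Finset.sum_const, nsmul_eq_mul]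
    have : ((m.card : R) + 1) * (S * M - 1) = 0 := by linear_combination hsum
    exact sub_eq_zero.mp ((mul_eq_zero.mp this).resolve_left (Nat.cast_add_one_ne_zero _))
  obtain ⟨i, hi⟩ := hm
  have : a i * M = 0 := by rw [hmid i hi, hSM, sub_self]
  exact hM (Finset.prod_eq_zero hi ((mul_eq_zero.mp this).resolve_right hM))

end CommRing
end MvPolynomial

open MvPolynomial

/-- The inequivalence conclusion of Proposition 1.4: no `ℂ`-algebra automorphism of
`ℂ[x₁,…,xₙ]` maps `⟨p⟩` onto `⟨q⟩`, i.e. the hypersurfaces `V(p)` and `V(q)` are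
inequivalent embeddings in `ℂⁿ`. -/
theorem prop_1_4_inequivalence (n : ℕ) (hn : 3 ≤ n)
    (p q : MvPolynomial (Fin n) ℂ)
    (hp : p = (∑ i, X i) - ∏ i, X i)
    (hq : q = X (⟨0, by omega⟩ : Fin n)
        + (∑ i ∈ Finset.univ.filter (fun i : Fin n => 0 < i.val), X i)
          * (∏ i ∈ Finset.univ.filter (fun i : Fin n => 0 < i.val ∧ i.val < n - 1), X i)
        - ∏ i, X i) :
    ¬ ∃ σ : MvPolynomial (Fin n) ℂ ≃ₐ[ℂ] MvPolynomial (Fin n) ℂ,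
      Ideal.map σ (Ideal.span {p}) = Ideal.span {q} := by
  rintro ⟨σ, hσ⟩
  set i₀ : Fin n := ⟨0, by omega⟩
  set l : Fin n := ⟨n - 1, by omega⟩
  set m := Finset.univ.filter fun i : Fin n => 0 < i.val ∧ i.val < n - 1
  have hpos : Finset.univ.filter (fun i : Fin n => 0 < i.val) = insert l m := by
    ext i; simp [m, l, Fin.ext_iff]; omega
  have hl : l ∉ m := by simp [m, l]
  have hi₀ : i₀ ∉ insert l m := by simp [m, l, i₀, Fin.ext_iff]; omega
  have huniv : insert i₀ (insert l m) = Finset.univ := by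
    ext i; simp [m, l, i₀, Fin.ext_iff]; omega
  have hm : m.Nonempty := ⟨⟨1, by omega⟩, by simp [m]; omega⟩
  have hassoc : Associated (σ p) q := Ideal.span_singleton_eq_span_singleton.mp <| by
    rw [← hσ, Ideal.map_span, Set.image_singleton]
  rw [hpos] at hq
  subst hp hq
  exact not_isCriticalPoint_X_add_sum_mul_prod_sub_prod hl hi₀ huniv hm _
    ((isCriticalPoint_sum_X_sub_prod_X.map_algEquiv σ).of_associated hassoc)
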